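/- arXiv:1804.09701 — 2 statements merged into one kernel-verified Lean document; each statement's English description precedes it below -/
import Mathlib

section
/- Let b_l, b_m be distinct basis vectors and g an automorphism of G(V) with g(b_l) = b_m and g(b_m) = b_l. For any vertex u: both b_l, b_m ∈ S_u if and only if both b_l, b_m ∈ S_{g(u)}. -/
open Finset

/-- Vertices of the non-zero component graph: nonzero vectors of `V = (Fin n → ZMod 2)`. -/
abbrev Vtx (n : ℕ) := {v : Fin n → ZMod 2 // v ≠ 0}

/-- The support (skeleton) of a vector: basis vectors with nonzero coefficient. -/
def supp {n : ℕ} (v : Fin n → ZMod 2) : Finset (Fin n) :=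
  Finset.univ.filter (fun i => v i ≠ 0)

/-- The non-zero component graph of an `n`-dimensional vector space over `F_2`:
two distinct nonzero vectors are adjacent iff their supports intersect. -/
def NZC (n : ℕ) : SimpleGraph (Vtx n) where
  Adj u v := u ≠ v ∧ ∃ i, u.1 i ≠ 0 ∧ v.1 i ≠ 0
  symm := by
    constructor
    rintro u v ⟨h1, i, h2, h3⟩
    exact ⟨h1.symm, i, h3, h2⟩
  loopless := by
    constructor
    rintro u ⟨h, -⟩
    exact h rfl

theorem SimpleGraph.Iso.adj_both_iff_of_swap {V : Type*} {G : SimpleGraph V} (g : G ≃g G)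
    {a b : V} (ha : g a = b) (hb : g b = a) (u : V) :
    (G.Adj u a ∧ G.Adj u b) ↔ (G.Adj (g u) a ∧ G.Adj (g u) b) := by
  rw [← g.map_adj_iff (v := u) (w := a), ← g.map_adj_iff (v := u) (w := b), ha, hb, and_comm]

lemma mem_supp_iff {n : ℕ} (v : Fin n → ZMod 2) (i : Fin n) :
    i ∈ supp v ↔ v i ≠ 0 := by
  simp [supp]

lemma NZC.adj_iff_of_supp_eq_singleton {n : ℕ} {b : Vtx n} {l : Fin n}
    (hb : supp b.1 = {l}) (u : Vtx n) :
    (NZC n).Adj u b ↔ u ≠ b ∧ l ∈ supp u.1 := by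
  simp only [NZC, ← mem_supp_iff, hb, mem_singleton, exists_eq_right]

lemma NZC.mem_supp_both_iff_adj_both {n : ℕ} {l m : Fin n} (hlm : l ≠ m)
    {bl bm : Vtx n} (hbl : supp bl.1 = {l}) (hbm : supp bm.1 = {m}) (u : Vtx n) :
    (l ∈ supp u.1 ∧ m ∈ supp u.1) ↔ ((NZC n).Adj u bl ∧ (NZC n).Adj u bm) := by
  rw [NZC.adj_iff_of_supp_eq_singleton hbl, NZC.adj_iff_of_supp_eq_singleton hbm]
  refine ⟨fun ⟨hl, hm⟩ => ⟨⟨?_, hl⟩, ⟨?_, hm⟩⟩, fun h => ⟨h.1.2, h.2.2⟩⟩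
  · rintro rfl
    exact hlm (mem_singleton.1 (hbl ▸ hm)).symm
  · rintro rfl
    exact hlm (mem_singleton.1 (hbm ▸ hl))

theorem swap_supp_both_general (n : ℕ) (l m : Fin n) (hlm : l ≠ m)
    (bl bm : Vtx n) (hbl : supp bl.1 = {l}) (hbm : supp bm.1 = {m})
    (g : NZC n ≃g NZC n) (h1 : g bl = bm) (h2 : g bm = bl) (u : Vtx n) :
    (l ∈ supp u.1 ∧ m ∈ supp u.1) ↔ (l ∈ supp (g u).1 ∧ m ∈ supp (g u).1) := by
  rw [NZC.mem_supp_both_iff_adj_both hlm hbl hbm, NZC.mem_supp_both_iff_adj_both hlm hbl hbm]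
  exact g.adj_both_iff_of_swap h1 h2 u

/-- If `g` swaps the basis vectors `b_l, b_m`, then both `b_l, b_m ∈ S_u` iff both
`b_l, b_m ∈ S_{g(u)}`. -/
theorem swap_supp_both (n : ℕ) (hn : 3 ≤ n) (l m : Fin n) (hlm : l ≠ m)
    (bl bm : Vtx n) (hbl : supp bl.1 = {l}) (hbm : supp bm.1 = {m})
    (g : NZC n ≃g NZC n) (h1 : g bl = bm) (h2 : g bm = bl) (u : Vtx n) :
    (l ∈ supp u.1 ∧ m ∈ supp u.1) ↔ (l ∈ supp (g u).1 ∧ m ∈ supp (g u).1) :=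
  swap_supp_both_general n l m hlm bl bm hbl hbm g h1 h2 u
end

section
/- Let n ≥ 4, let b_l, b_m be distinct basis vectors, and let g be an automorphism of G(V) with g(b_l) = b_m and g(b_m) = b_l. Then g fixes the vertex u = b_l + b_m. -/
open Finset

/-!
A vertex `u` is adjacent or equal to `w` exactly when their supports meet, so every
automorphism preserves the relation "supports meet". If `supp u = supp a ∪ supp b`, then `u`
meets `w` iff `a` or `b` does; hence `g u` meets the same vertices as the vertex `u'` with
`supp u' = supp (g a) ∪ supp (g b)`. Testing against the basis vectors shows that `g u` and `u'`
have the same support, and over `F₂` a vector is determined by its support.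
-/

section SuppMeet

variable {n : ℕ}

theorem mem_supp {v : Fin n → ZMod 2} {i : Fin n} : i ∈ supp v ↔ v i ≠ 0 := by
  simp [supp]

theorem supp_injective : Function.Injective (supp : (Fin n → ZMod 2) → Finset (Fin n)) := by
  intro v w h
  funext i
  have ne_zero_iff_imp_eq : ∀ a b : ZMod 2, (a ≠ 0 ↔ b ≠ 0) → a = b := by decide
  exact ne_zero_iff_imp_eq _ _ (by rw [← mem_supp, ← mem_supp, h])

theorem supp_single (i : Fin n) : supp (Pi.single i 1 : Fin n → ZMod 2) = {i} := by
  ext j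
  rw [mem_supp, mem_singleton]
  by_cases hji : j = i <;> simp [hji]

def SuppMeet (v w : Vtx n) : Prop := ¬ Disjoint (supp v.1) (supp w.1)

theorem suppMeet_iff_eq_or_adj (v w : Vtx n) : SuppMeet v w ↔ v = w ∨ (NZC n).Adj v w := by
  simp only [SuppMeet, not_disjoint_iff, mem_supp]
  constructor
  · rintro ⟨i, hv, hw⟩
    by_cases hvw : v = w
    · exact .inl hvw
    · exact .inr ⟨hvw, i, hv, hw⟩
  · rintro (rfl | ⟨-, hmeet⟩)
    · obtain ⟨i, hi⟩ := Function.ne_iff.mp v.2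
      exact ⟨i, hi, hi⟩
    · exact hmeet

theorem SimpleGraph.Iso.suppMeet_iff (g : NZC n ≃g NZC n) (v w : Vtx n) :
    SuppMeet (g v) (g w) ↔ SuppMeet v w := by
  rw [suppMeet_iff_eq_or_adj, suppMeet_iff_eq_or_adj, g.injective.eq_iff, g.map_adj_iff]

def basisVtx (i : Fin n) : Vtx n :=
  ⟨Pi.single i 1, fun h => by simpa using congrFun h i⟩

theorem suppMeet_basisVtx {v : Vtx n} {i : Fin n} : SuppMeet v (basisVtx i) ↔ i ∈ supp v.1 := by
  rw [SuppMeet, basisVtx, supp_single, disjoint_singleton_right, not_not]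

theorem eq_of_suppMeet_iff {v w : Vtx n} (h : ∀ x, SuppMeet v x ↔ SuppMeet w x) : v = w := by
  refine Subtype.ext (supp_injective ?_)
  ext i
  rw [← suppMeet_basisVtx, ← suppMeet_basisVtx, h]

theorem suppMeet_iff_of_supp_eq_union {u a b : Vtx n} (hu : supp u.1 = supp a.1 ∪ supp b.1)
    (w : Vtx n) : SuppMeet u w ↔ SuppMeet a w ∨ SuppMeet b w := by
  rw [SuppMeet, hu, disjoint_union_left, not_and_or]
  rfl

theorem SimpleGraph.Iso.map_eq_of_supp_eq_union (g : NZC n ≃g NZC n) {u a b u' : Vtx n}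
    (hu : supp u.1 = supp a.1 ∪ supp b.1) (hu' : supp u'.1 = supp (g a).1 ∪ supp (g b).1) :
    g u = u' := by
  refine eq_of_suppMeet_iff fun x => ?_
  obtain ⟨y, rfl⟩ := g.surjective x
  rw [g.suppMeet_iff, suppMeet_iff_of_supp_eq_union hu, suppMeet_iff_of_supp_eq_union hu',
    g.suppMeet_iff, g.suppMeet_iff]

end SuppMeet

theorem swap_fixes_pair_vertex_general (n : ℕ) (l m : Fin n)
    (bl bm : Vtx n) (hbl : supp bl.1 = {l}) (hbm : supp bm.1 = {m})
    (g : NZC n ≃g NZC n) (h1 : g bl = bm) (h2 : g bm = bl)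
    (u : Vtx n) (hu : supp u.1 = {l, m}) : g u = u := by
  have hu_union : supp u.1 = supp bl.1 ∪ supp bm.1 := by
    rw [hu, hbl, hbm, insert_eq]
  refine g.map_eq_of_supp_eq_union hu_union ?_
  rw [h1, h2, hu_union, union_comm]

/-- If `n ≥ 4` and `g` swaps the basis vectors `b_l, b_m`, then `g` fixes the vertex
with support `{b_l, b_m}`. -/
theorem swap_fixes_pair_vertex (n : ℕ) (hn : 4 ≤ n) (l m : Fin n) (hlm : l ≠ m)
    (bl bm : Vtx n) (hbl : supp bl.1 = {l}) (hbm : supp bm.1 = {m})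
    (g : NZC n ≃g NZC n) (h1 : g bl = bm) (h2 : g bm = bl)
    (u : Vtx n) (hu : supp u.1 = {l, m}) : g u = u :=
  swap_fixes_pair_vertex_general n l m bl bm hbl hbm g h1 h2 u hu
end
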